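/- Fix m ≥ 1 and integers μ_k < ν_k (k = 1,…,m). For any two L-equivalence classes A and B of reduced paradiagrams of length m, if U(A) ∩ U(B) ≠ ∅, then there exists an L-equivalence class C of reduced paradiagrams of length m with U(C) = U(A) ∩ U(B). -/
import Mathlib


/-- The alphabet `{0, 1, *}` of paradiagrams. -/
inductive PD where
  | zero : PD
  | one : PD
  | star : PD
deriving DecidableEq

/-- A paradiagram is reduced if no entry `1` is immediately followed by an entry `0`. -/
def Reduced {m : ℕ} (δ : Fin m → PD) : Prop :=
  ∀ (j : ℕ) (h : j + 1 < m),
    ¬(δ ⟨j, Nat.lt_of_succ_lt h⟩ = PD.one ∧ δ ⟨j + 1, h⟩ = PD.zero)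

/-- The face `F(δ) = {y ∈ Π : y_k = μ_k if δ_k = 0, y_k = ν_k if δ_k = 1}` of the
parallelepiped `Π = {y : μ_k ≤ y_k ≤ ν_k}`. -/
def Face {m : ℕ} (μ ν : Fin m → ℤ) (δ : Fin m → PD) : Set (Fin m → ℝ) :=
  {y | ∀ k, ((μ k : ℝ) ≤ y k ∧ y k ≤ (ν k : ℝ)) ∧
            (δ k = PD.zero → y k = (μ k : ℝ)) ∧ (δ k = PD.one → y k = (ν k : ℝ))}

/-- An L-move replaces a consecutive pair of entries `(*, 0)` by `(1, *)`. -/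
def LMove {m : ℕ} (δ δ' : Fin m → PD) : Prop :=
  ∃ (j : ℕ) (h : j + 1 < m),
    δ ⟨j, Nat.lt_of_succ_lt h⟩ = PD.star ∧ δ ⟨j + 1, h⟩ = PD.zero ∧
    δ' ⟨j, Nat.lt_of_succ_lt h⟩ = PD.one ∧ δ' ⟨j + 1, h⟩ = PD.star ∧
    ∀ k : Fin m, (k : ℕ) ≠ j → (k : ℕ) ≠ j + 1 → δ' k = δ k

/-- L-equivalence: the equivalence relation generated by L-moves. -/
def LEquiv {m : ℕ} (δ δ' : Fin m → PD) : Prop := Relation.EqvGen LMove δ δ'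

/-- An L-equivalence class of reduced paradiagrams. -/
def IsLClass {m : ℕ} (A : Set (Fin m → PD)) : Prop :=
  ∃ δ₀, Reduced δ₀ ∧ A = {δ | LEquiv δ₀ δ}

/-- `U(A) = ⋃_{δ ∈ A} F(δ)`. -/
def UF {m : ℕ} (μ ν : Fin m → ℤ) (A : Set (Fin m → PD)) : Set (Fin m → ℝ) :=
  ⋃ δ ∈ A, Face μ ν δ

/-- The number of `*` entries of a paradiagram. -/
def stars {m : ℕ} (δ : Fin m → PD) : ℕ :=
  (Finset.univ.filter fun k => δ k = PD.star).card

/-- The size of the initial parabox: the number of leading `0` entries. -/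
def initSize {m : ℕ} (δ : Fin m → PD) : ℕ :=
  ((List.ofFn δ).takeWhile (fun x => decide (x = PD.zero))).length

/-- The paramitosis of a paradiagram `δ` with initial parabox `0^a`: the set of
paradiagrams obtained by replacing the initial segment `0^a` by `1^j * 0^{a−1−j}`
for `j = 0, …, a−1` (empty if `a = 0`). -/
def Mop {m : ℕ} (δ : Fin m → PD) : Set (Fin m → PD) :=
  {δ' | ∃ j : ℕ, j < initSize δ ∧ δ' = fun k : Fin m =>
      if k.val < j then PD.one
      else if k.val = j then PD.star
      else if k.val < initSize δ then PD.zero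
      else δ k}

/-- Paramitosis of a set of paradiagrams. -/
def MSet {m : ℕ} (A : Set (Fin m → PD)) : Set (Fin m → PD) := ⋃ δ ∈ A, Mop δ

/-- `𝒮(S) = ∑_{y ∈ S ∩ ℤ^m} t^{σ(y)} ∈ ℤ[t,t⁻¹]`, where `σ(y) = y₁ + ⋯ + y_m`. -/
noncomputable def charS {m : ℕ} (S : Set (Fin m → ℝ)) : LaurentPolynomial ℤ :=
  ∑ᶠ z ∈ {z : Fin m → ℤ | (fun k => (z k : ℝ)) ∈ S}, LaurentPolynomial.T (∑ k, z k)

section AuxStmt12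

open scoped Classical

variable {m : ℕ}

/-- `δ` has letter `p` at (0-indexed) position `j` (false if out of range). -/
def dIs (δ : Fin m → PD) (j : ℕ) (p : PD) : Prop := ∃ h : j < m, δ ⟨j, h⟩ = p

/-- The set of "edges" of a paradiagram. -/
def Eset (δ : Fin m → PD) : Set ℕ :=
  {l | (∃ j, l = j + 1 ∧ dIs δ j PD.one) ∨ dIs δ l PD.zero}

/-- The constraint attached to an edge `l`. -/
def Dcon (μ ν : Fin m → ℤ) (y : Fin m → ℝ) (l : ℕ) : Prop :=
  (∃ j, ∃ h : j < m, l = j + 1 ∧ y ⟨j, h⟩ = (ν ⟨j, h⟩ : ℝ)) ∨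
  (∃ h : l < m, y ⟨l, h⟩ = (μ ⟨l, h⟩ : ℝ))

/-- Solution set of a system of edge constraints. -/
def Sol (μ ν : Fin m → ℤ) (E : Set ℕ) : Set (Fin m → ℝ) :=
  {y | (∀ k, (μ k : ℝ) ≤ y k ∧ y k ≤ (ν k : ℝ)) ∧ ∀ l ∈ E, Dcon μ ν y l}

lemma Eset_le {δ : Fin m → PD} {l : ℕ} (hl : l ∈ Eset δ) : l ≤ m := by
  rcases hl with ⟨j, rfl, hj, _⟩ | ⟨h, _⟩ <;> omega

lemma Sol_union (μ ν : Fin m → ℤ) (E₁ E₂ : Set ℕ) :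
    Sol μ ν E₁ ∩ Sol μ ν E₂ = Sol μ ν (E₁ ∪ E₂) := by
  ext y
  constructor
  · rintro ⟨⟨hb, h1⟩, ⟨-, h2⟩⟩
    exact ⟨hb, fun l hl => hl.elim (h1 l) (h2 l)⟩
  · rintro ⟨hb, h⟩
    exact ⟨⟨hb, fun l hl => h l (Or.inl hl)⟩, ⟨hb, fun l hl => h l (Or.inr hl)⟩⟩

lemma Eset_move {δ δ' : Fin m → PD} (hmv : LMove δ δ') : Eset δ' = Eset δ := by
  obtain ⟨j, h, hs, hz, ho', hs', hag⟩ := hmv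
  have hagn : ∀ (i : ℕ) (hi : i < m), i ≠ j → i ≠ j + 1 → δ' ⟨i, hi⟩ = δ ⟨i, hi⟩ :=
    fun i hi h1 h2 => hag ⟨i, hi⟩ h1 h2
  ext l
  simp only [Eset, Set.mem_setOf_eq, dIs]
  constructor
  · rintro (⟨j', rfl, hj', hone⟩ | ⟨hl, hzero⟩)
    · by_cases hjj : j' = j
      · subst hjj
        right
        exact ⟨h, hz⟩
      · by_cases hjj1 : j' = j + 1
        · exfalso; subst hjj1; rw [hs'] at hone; cases hone
        · left; exact ⟨j', rfl, hj', by rw [hagn j' hj' hjj hjj1] at hone; exact hone⟩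
    · by_cases hlj : l = j
      · exfalso; subst hlj; rw [ho'] at hzero; cases hzero
      · by_cases hlj1 : l = j + 1
        · exfalso; subst hlj1; rw [hs'] at hzero; cases hzero
        · right; exact ⟨hl, by rw [hagn l hl hlj hlj1] at hzero; exact hzero⟩
  · rintro (⟨j', rfl, hj', hone⟩ | ⟨hl, hzero⟩)
    · by_cases hjj : j' = j
      · exfalso; subst hjj; rw [hs] at hone; cases hone
      · by_cases hjj1 : j' = j + 1
        · exfalso; subst hjj1; rw [hz] at hone; cases hone
        · left; exact ⟨j', rfl, hj', by rw [hagn j' hj' hjj hjj1]; exact hone⟩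
    · by_cases hlj : l = j
      · exfalso; subst hlj; rw [hs] at hzero; cases hzero
      · by_cases hlj1 : l = j + 1
        · subst hlj1; left; exact ⟨j, rfl, Nat.lt_of_succ_lt h, ho'⟩
        · right; exact ⟨hl, by rw [hagn l hl hlj hlj1]; exact hzero⟩

lemma Eset_equiv {δ δ' : Fin m → PD} (h : LEquiv δ δ') : Eset δ' = Eset δ := by
  induction h with
  | rel _ _ hmv => exact Eset_move hmv
  | refl _ => rfl
  | symm _ _ _ ih => exact ih.symm
  | trans _ _ _ _ _ ih1 ih2 => exact ih2.trans ih1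

lemma Reduced_move {δ δ' : Fin m → PD} (hmv : LMove δ δ') (hred : Reduced δ) :
    Reduced δ' := by
  obtain ⟨j, h, hs, hz, ho', hs', hag⟩ := hmv
  intro k hk ⟨h1, h0⟩
  by_cases hkj : k = j
  · rw [show (⟨k + 1, hk⟩ : Fin m) = ⟨j + 1, h⟩ from Fin.ext (show k + 1 = j + 1 by omega), hs'] at h0
    cases h0
  · by_cases hkj1 : k = j + 1
    · rw [show (⟨k, Nat.lt_of_succ_lt hk⟩ : Fin m) = ⟨j + 1, h⟩ from Fin.ext hkj1,
        hs'] at h1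
      cases h1
    · by_cases hk1j : k + 1 = j
      · rw [show (⟨k + 1, hk⟩ : Fin m) = ⟨j, Nat.lt_of_succ_lt h⟩ from Fin.ext hk1j,
          ho'] at h0
        cases h0
      · have e1 : δ' ⟨k, Nat.lt_of_succ_lt hk⟩ = δ ⟨k, Nat.lt_of_succ_lt hk⟩ :=
          hag _ hkj hkj1
        have e0 : δ' ⟨k + 1, hk⟩ = δ ⟨k + 1, hk⟩ :=
          hag _ hk1j (show k + 1 ≠ j + 1 by omega)
        exact hred k hk ⟨e1 ▸ h1, e0 ▸ h0⟩

lemma Reduced_move_rev {δ δ' : Fin m → PD} (hmv : LMove δ' δ) (hred : Reduced δ) :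
    Reduced δ' := by
  obtain ⟨j, h, hs, hz, ho', hs', hag⟩ := hmv
  intro k hk ⟨h1, h0⟩
  by_cases hkj : k = j
  · rw [show (⟨k, Nat.lt_of_succ_lt hk⟩ : Fin m) = ⟨j, Nat.lt_of_succ_lt h⟩ from
      Fin.ext hkj, hs] at h1
    cases h1
  · by_cases hkj1 : k = j + 1
    · rw [show (⟨k, Nat.lt_of_succ_lt hk⟩ : Fin m) = ⟨j + 1, h⟩ from Fin.ext hkj1,
        hz] at h1
      cases h1
    · by_cases hk1j : k + 1 = j
      · rw [show (⟨k + 1, hk⟩ : Fin m) = ⟨j, Nat.lt_of_succ_lt h⟩ from Fin.ext hk1j,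
          hs] at h0
        cases h0
      · have e1 : δ ⟨k, Nat.lt_of_succ_lt hk⟩ = δ' ⟨k, Nat.lt_of_succ_lt hk⟩ :=
          hag _ hkj hkj1
        have e0 : δ ⟨k + 1, hk⟩ = δ' ⟨k + 1, hk⟩ :=
          hag _ hk1j (show k + 1 ≠ j + 1 by omega)
        exact hred k hk ⟨e1 ▸ h1, e0 ▸ h0⟩

lemma Face_subset_Sol (μ ν : Fin m → ℤ) {δ : Fin m → PD} :
    Face μ ν δ ⊆ Sol μ ν (Eset δ) := by
  intro y hy
  refine ⟨fun k => (hy k).1, ?_⟩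
  rintro l (⟨j, rfl, hj, hone⟩ | ⟨hl, hzero⟩)
  · exact Or.inl ⟨j, hj, rfl, (hy ⟨j, hj⟩).2.2 hone⟩
  · exact Or.inr ⟨hl, (hy ⟨l, hl⟩).2.1 hzero⟩

end AuxStmt12
section AuxStmt12b

open scoped Classical

variable {m : ℕ}

/-- Mismatch set of `δ` against a point `y`. -/
noncomputable def Mis (μ ν : Fin m → ℤ) (δ : Fin m → PD) (y : Fin m → ℝ) : Finset (Fin m) :=
  Finset.univ.filter fun k =>
    (δ k = PD.zero ∧ y k ≠ (μ k : ℝ)) ∨ (δ k = PD.one ∧ y k ≠ (ν k : ℝ))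

lemma Mis_empty_face {μ ν : Fin m → ℤ} {δ : Fin m → PD} {y : Fin m → ℝ}
    (hy : y ∈ Sol μ ν (Eset δ)) (hM : Mis μ ν δ y = ∅) : y ∈ Face μ ν δ := by
  intro k
  refine ⟨hy.1 k, ?_, ?_⟩ <;> intro hk <;> by_contra hne
  · exact Finset.eq_empty_iff_forall_notMem.mp hM k
      (Finset.mem_filter.mpr ⟨Finset.mem_univ k, Or.inl ⟨hk, hne⟩⟩)
  · exact Finset.eq_empty_iff_forall_notMem.mp hM k
      (Finset.mem_filter.mpr ⟨Finset.mem_univ k, Or.inr ⟨hk, hne⟩⟩)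

lemma key (μ ν : Fin m → ℤ) (hlt : ∀ k, μ k < ν k) (y : Fin m → ℝ) :
    ∀ n (δ : Fin m → PD), Reduced δ → y ∈ Sol μ ν (Eset δ) → (Mis μ ν δ y).card ≤ n →
      ∃ δ', LEquiv δ δ' ∧ y ∈ Face μ ν δ' := by
  intro n
  induction n with
  | zero =>
    intro δ hred hy hcard
    have hM : Mis μ ν δ y = ∅ := Finset.card_eq_zero.mp (Nat.le_zero.mp hcard)
    exact ⟨δ, Relation.EqvGen.refl δ, Mis_empty_face hy hM⟩
  | succ n ih =>
    intro δ hred hy hcard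
    rcases (Mis μ ν δ y).eq_empty_or_nonempty with hM | hMne
    · exact ⟨δ, Relation.EqvGen.refl δ, Mis_empty_face hy hM⟩
    by_cases h0 : ∃ k, k ∈ Mis μ ν δ y ∧ δ k = PD.zero
    · -- a 0-type mismatch exists; take the least one
      set S0 : Finset (Fin m) := (Mis μ ν δ y).filter (fun k => δ k = PD.zero) with hS0
      have hS0ne : S0.Nonempty := by
        obtain ⟨k, hk, hz⟩ := h0
        exact ⟨k, Finset.mem_filter.mpr ⟨hk, hz⟩⟩
      set k0 : Fin m := S0.min' hS0ne with hk0def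
      have hk0S : k0 ∈ S0 := Finset.min'_mem _ _
      have hk0M : k0 ∈ Mis μ ν δ y := (Finset.mem_filter.mp hk0S).1
      have hk0z : δ k0 = PD.zero := (Finset.mem_filter.mp hk0S).2
      have hk0y : y k0 ≠ (μ k0 : ℝ) := by
        rcases (Finset.mem_filter.mp hk0M).2 with ⟨_, hh⟩ | ⟨h1, _⟩
        · exact hh
        · rw [hk0z] at h1; cases h1
      have hedge : (k0 : ℕ) ∈ Eset δ := Or.inr ⟨k0.isLt, hk0z⟩
      rcases hy.2 _ hedge with ⟨j, hj, hje, hyj⟩ | ⟨h', hyl⟩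
      swap
      · exact absurd hyl hk0y
      set kj : Fin m := ⟨j, hj⟩ with hkjdef
      have hkjval : (kj : ℕ) = j := rfl
      have hyjν : y kj = (ν kj : ℝ) := hyj
      have hμν : (μ kj : ℝ) ≠ (ν kj : ℝ) := ne_of_lt (by exact_mod_cast hlt kj)
      have hjm : j + 1 < m := hje ▸ k0.isLt
      cases hcase : δ kj with
      | zero =>
        exfalso
        have hkjS : kj ∈ S0 := Finset.mem_filter.mpr
          ⟨Finset.mem_filter.mpr ⟨Finset.mem_univ kj,
            Or.inl ⟨hcase, by rw [hyjν]; exact fun e => hμν e.symm⟩⟩, hcase⟩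
        have := Finset.min'_le S0 kj hkjS
        rw [← hk0def] at this
        have hlt' : (kj : ℕ) < (k0 : ℕ) := by omega
        exact absurd (Fin.lt_def.mpr hlt') (not_lt.mpr this)
      | one =>
        exfalso
        apply hred j hjm
        constructor
        · exact hcase
        · rw [show (⟨j + 1, hjm⟩ : Fin m) = k0 from Fin.ext hje.symm]
          exact hk0z
      | star =>
        set δ' : Fin m → PD := fun k =>
          if (k : ℕ) = j then PD.one else if (k : ℕ) = j + 1 then PD.star else δ k
          with hδ'def
        have hmv : LMove δ δ' := by
          refine ⟨j, hjm, hcase, ?_, ?_, ?_, ?_⟩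
          · rw [show (⟨j + 1, hjm⟩ : Fin m) = k0 from Fin.ext hje.symm]; exact hk0z
          · show (if j = j then PD.one else _) = PD.one
            rw [if_pos rfl]
          · show (if j + 1 = j then PD.one else if j + 1 = j + 1 then PD.star else _) = PD.star
            rw [if_neg (by omega), if_pos rfl]
          · intro k hk1 hk2
            show (if (k : ℕ) = j then _ else if (k : ℕ) = j + 1 then _ else δ k) = δ k
            rw [if_neg hk1, if_neg hk2]
        have hred' := Reduced_move hmv hred
        have hy' : y ∈ Sol μ ν (Eset δ') := by rw [Eset_move hmv]; exact hy
        have hsub : Mis μ ν δ' y ⊆ (Mis μ ν δ y).erase k0 := by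
          intro k hk
          have hk' := (Finset.mem_filter.mp hk).2
          by_cases hkj' : (k : ℕ) = j
          · exfalso
            have hkkj : k = kj := Fin.ext hkj'
            have he1 : δ' k = PD.one := by
              show (if (k : ℕ) = j then PD.one else _) = PD.one
              rw [if_pos hkj']
            rcases hk' with ⟨hz', _⟩ | ⟨_, hν'⟩
            · rw [he1] at hz'; cases hz'
            · exact hν' (by rw [hkkj]; exact hyjν)
          · by_cases hkj1 : (k : ℕ) = j + 1
            · exfalso
              have he1 : δ' k = PD.star := by
                show (if (k : ℕ) = j then _ else if (k : ℕ) = j + 1 then PD.star else _)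
                  = PD.star
                rw [if_neg hkj', if_pos hkj1]
              rcases hk' with ⟨hz', _⟩ | ⟨ho'', _⟩
              · rw [he1] at hz'; cases hz'
              · rw [he1] at ho''; cases ho''
            · have hδk : δ' k = δ k := by
                show (if (k : ℕ) = j then _ else if (k : ℕ) = j + 1 then _ else δ k) = δ k
                rw [if_neg hkj', if_neg hkj1]
              refine Finset.mem_erase.mpr ⟨?_, ?_⟩
              · intro hkk0
                exact hkj1 (by rw [hkk0]; exact hje)
              · rw [hδk] at hk'
                exact Finset.mem_filter.mpr ⟨Finset.mem_univ k, hk'⟩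
        have hcard' : (Mis μ ν δ' y).card ≤ n := by
          have h1 := Finset.card_le_card hsub
          have h2 := Finset.card_erase_of_mem hk0M
          have h3 : 1 ≤ (Mis μ ν δ y).card := Finset.card_pos.mpr ⟨k0, hk0M⟩
          omega
        obtain ⟨δ'', heq, hface⟩ := ih δ' hred' hy' hcard'
        exact ⟨δ'', Relation.EqvGen.trans _ _ _ (Relation.EqvGen.rel _ _ hmv) heq, hface⟩
    · -- all mismatches are 1-type; take the greatest one
      have hone : ∀ k ∈ Mis μ ν δ y, δ k = PD.one ∧ y k ≠ (ν k : ℝ) := by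
        intro k hk
        rcases (Finset.mem_filter.mp hk).2 with ⟨hz, _⟩ | h1
        · exact absurd ⟨k, hk, hz⟩ h0
        · exact h1
      set k1 : Fin m := (Mis μ ν δ y).max' hMne with hk1def
      have hk1M : k1 ∈ Mis μ ν δ y := Finset.max'_mem _ _
      obtain ⟨hk1one, hk1y⟩ := hone k1 hk1M
      have hedge : ((k1 : ℕ) + 1) ∈ Eset δ := Or.inl ⟨(k1 : ℕ), rfl, k1.isLt, hk1one⟩
      rcases hy.2 _ hedge with ⟨j, hj, hje, hyj⟩ | ⟨h', hyl⟩
      · exfalso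
        have : (⟨j, hj⟩ : Fin m) = k1 := Fin.ext (show j = (k1 : ℕ) by omega)
        rw [this] at hyj
        exact hk1y hyj
      set kn : Fin m := ⟨(k1 : ℕ) + 1, h'⟩ with hkndef
      have hknval : (kn : ℕ) = (k1 : ℕ) + 1 := rfl
      have hyn : y kn = (μ kn : ℝ) := hyl
      have hμν : (μ kn : ℝ) ≠ (ν kn : ℝ) := ne_of_lt (by exact_mod_cast hlt kn)
      cases hcase : δ kn with
      | zero =>
        exact absurd ⟨hk1one, hcase⟩ (hred (k1 : ℕ) h')
      | one =>
        exfalso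
        have hknM : kn ∈ Mis μ ν δ y := Finset.mem_filter.mpr
          ⟨Finset.mem_univ kn, Or.inr ⟨hcase, by rw [hyn]; exact hμν⟩⟩
        have := Finset.le_max' (Mis μ ν δ y) kn hknM
        rw [← hk1def] at this
        have : (kn : ℕ) ≤ (k1 : ℕ) := Fin.le_def.mp this
        omega
      | star =>
        set δ' : Fin m → PD := fun k =>
          if (k : ℕ) = (k1 : ℕ) then PD.star
          else if (k : ℕ) = (k1 : ℕ) + 1 then PD.zero else δ k
          with hδ'def
        have hmv : LMove δ' δ := by
          refine ⟨(k1 : ℕ), h', ?_, ?_, hk1one, hcase, ?_⟩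
          · show (if (k1 : ℕ) = (k1 : ℕ) then PD.star else _) = PD.star
            rw [if_pos rfl]
          · show (if (k1 : ℕ) + 1 = (k1 : ℕ) then _
              else if (k1 : ℕ) + 1 = (k1 : ℕ) + 1 then PD.zero else _) = PD.zero
            rw [if_neg (by omega), if_pos rfl]
          · intro k hkA hkB
            show δ k = (if (k : ℕ) = (k1 : ℕ) then _
              else if (k : ℕ) = (k1 : ℕ) + 1 then _ else δ k)
            rw [if_neg hkA, if_neg hkB]
        have hred' := Reduced_move_rev hmv hred
        have hy' : y ∈ Sol μ ν (Eset δ') := by rw [← Eset_move hmv]; exact hy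
        have hsub : Mis μ ν δ' y ⊆ (Mis μ ν δ y).erase k1 := by
          intro k hk
          have hk' := (Finset.mem_filter.mp hk).2
          by_cases hkA : (k : ℕ) = (k1 : ℕ)
          · exfalso
            have he1 : δ' k = PD.star := by
              show (if (k : ℕ) = (k1 : ℕ) then PD.star else _) = PD.star
              rw [if_pos hkA]
            rcases hk' with ⟨hz', _⟩ | ⟨ho'', _⟩
            · rw [he1] at hz'; cases hz'
            · rw [he1] at ho''; cases ho''
          · by_cases hkB : (k : ℕ) = (k1 : ℕ) + 1
            · exfalso
              have hkkn : k = kn := Fin.ext hkB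
              have he1 : δ' k = PD.zero := by
                show (if (k : ℕ) = (k1 : ℕ) then _
                  else if (k : ℕ) = (k1 : ℕ) + 1 then PD.zero else _) = PD.zero
                rw [if_neg hkA, if_pos hkB]
              rcases hk' with ⟨_, hμ'⟩ | ⟨ho'', _⟩
              · exact hμ' (by rw [hkkn]; exact hyn)
              · rw [he1] at ho''; cases ho''
            · have hδk : δ' k = δ k := by
                show (if (k : ℕ) = (k1 : ℕ) then _
                  else if (k : ℕ) = (k1 : ℕ) + 1 then _ else δ k) = δ k
                rw [if_neg hkA, if_neg hkB]
              refine Finset.mem_erase.mpr ⟨fun e => hkA (by rw [e]), ?_⟩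
              rw [hδk] at hk'
              exact Finset.mem_filter.mpr ⟨Finset.mem_univ k, hk'⟩
        have hcard' : (Mis μ ν δ' y).card ≤ n := by
          have h1 := Finset.card_le_card hsub
          have h2 := Finset.card_erase_of_mem hk1M
          have h3 : 1 ≤ (Mis μ ν δ y).card := Finset.card_pos.mpr ⟨k1, hk1M⟩
          omega
        obtain ⟨δ'', heq, hface⟩ := ih δ' hred' hy' hcard'
        exact ⟨δ'', Relation.EqvGen.trans _ _ _
          (Relation.EqvGen.symm _ _ (Relation.EqvGen.rel _ _ hmv)) heq, hface⟩

end AuxStmt12b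
section AuxStmt12c

open scoped Classical

variable {m : ℕ}

lemma Sol_full (hm : 1 ≤ m) (μ ν : Fin m → ℤ) (hlt : ∀ k, μ k < ν k) {E : Set ℕ}
    (hE : ∀ l, l ≤ m → l ∈ E) {y : Fin m → ℝ} (hy : y ∈ Sol μ ν E) : False := by
  have keyμ : ∀ k, ∀ h : k < m, y ⟨k, h⟩ = (μ ⟨k, h⟩ : ℝ) := by
    intro k
    induction k using Nat.strong_induction_on with
    | _ k ih =>
      intro h
      rcases hy.2 k (hE k (le_of_lt h)) with ⟨j, hj, hje, hyj⟩ | ⟨h', hyl⟩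
      · exfalso
        rw [ih j (by omega) hj] at hyj
        exact absurd hyj (ne_of_lt (by exact_mod_cast hlt ⟨j, hj⟩))
      · exact hyl
  rcases hy.2 m (hE m le_rfl) with ⟨j, hj, hje, hyj⟩ | ⟨h', _⟩
  · rw [keyμ j hj] at hyj
    exact absurd hyj (ne_of_lt (by exact_mod_cast hlt ⟨j, hj⟩))
  · omega

/-- The canonical (normal-form) paradiagram attached to a set of edges. -/
noncomputable def deltaC (E : Set ℕ) : Fin m → PD := fun k =>
  if ∀ l ≤ (k : ℕ), l ∈ E then PD.zero
  else if ((k : ℕ) + 1) ∈ E then PD.one else PD.star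

lemma deltaC_red (E : Set ℕ) : Reduced (deltaC (m := m) E) := by
  rintro j h ⟨h1, h0⟩
  have h0' : (if ∀ l ≤ j + 1, l ∈ E then PD.zero
      else if j + 1 + 1 ∈ E then PD.one else PD.star) = PD.zero := h0
  have h1' : (if ∀ l ≤ j, l ∈ E then PD.zero
      else if j + 1 ∈ E then PD.one else PD.star) = PD.one := h1
  by_cases hA : ∀ l ≤ j + 1, l ∈ E
  · rw [if_pos (fun l hl => hA l (by omega))] at h1'
    cases h1'
  · rw [if_neg hA] at h0'
    by_cases hB : j + 1 + 1 ∈ E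
    · rw [if_pos hB] at h0'; cases h0'
    · rw [if_neg hB] at h0'; cases h0'

lemma deltaC_Eset (E : Set ℕ) (hEm : ∀ l ∈ E, l ≤ m) (l₀ : ℕ) (hl₀m : l₀ ≤ m)
    (hl₀ : l₀ ∉ E) : Eset (deltaC (m := m) E) = E := by
  ext l
  constructor
  · rintro (⟨j, rfl, hj, hone⟩ | ⟨hl, hzero⟩)
    · have h1' : (if ∀ l' ≤ j, l' ∈ E then PD.zero
          else if j + 1 ∈ E then PD.one else PD.star) = PD.one := hone
      by_cases hA : ∀ l' ≤ j, l' ∈ E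
      · rw [if_pos hA] at h1'; cases h1'
      · rw [if_neg hA] at h1'
        by_cases hB : j + 1 ∈ E
        · exact hB
        · rw [if_neg hB] at h1'; cases h1'
    · have h0' : (if ∀ l' ≤ l, l' ∈ E then PD.zero
          else if l + 1 ∈ E then PD.one else PD.star) = PD.zero := hzero
      by_cases hA : ∀ l' ≤ l, l' ∈ E
      · exact hA l le_rfl
      · rw [if_neg hA] at h0'
        by_cases hB : l + 1 ∈ E
        · rw [if_pos hB] at h0'; cases h0'
        · rw [if_neg hB] at h0'; cases h0'
  · intro hlE
    have hlm : l ≤ m := hEm l hlE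
    by_cases hall : ∀ l' < l, l' ∈ E
    · have hall' : ∀ l' ≤ l, l' ∈ E := fun l' hl' =>
        (Nat.lt_or_eq_of_le hl').elim (hall l') (fun e => e ▸ hlE)
      rcases Nat.lt_or_eq_of_le hlm with hlm' | rfl
      · right
        exact ⟨hlm', show (if ∀ l' ≤ l, l' ∈ E then PD.zero
          else if l + 1 ∈ E then PD.one else PD.star) = PD.zero from if_pos hall'⟩
      · exact absurd (hall' l₀ hl₀m) hl₀
    · push_neg at hall
      obtain ⟨l', hl'l, hl'E⟩ := hall
      have hjm : l - 1 < m := by omega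
      left
      refine ⟨l - 1, by omega, hjm, ?_⟩
      show (if ∀ l'' ≤ l - 1, l'' ∈ E then PD.zero
        else if l - 1 + 1 ∈ E then PD.one else PD.star) = PD.one
      rw [if_neg, if_pos]
      · rwa [show l - 1 + 1 = l by omega]
      · intro hc
        exact hl'E (hc l' (by omega))

lemma UF_class_eq_Sol (μ ν : Fin m → ℤ) (hlt : ∀ k, μ k < ν k) {δ₀ : Fin m → PD}
    (hred : Reduced δ₀) : UF μ ν {δ | LEquiv δ₀ δ} = Sol μ ν (Eset δ₀) := by
  apply Set.Subset.antisymm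
  · intro y hy
    simp only [UF, Set.mem_iUnion, Set.mem_setOf_eq] at hy
    obtain ⟨δ, hδ, hyF⟩ := hy
    rw [← Eset_equiv hδ]
    exact Face_subset_Sol μ ν hyF
  · intro y hy
    obtain ⟨δ', heq, hface⟩ := key μ ν hlt y (Mis μ ν δ₀ y).card δ₀ hred hy le_rfl
    exact Set.mem_biUnion heq hface

end AuxStmt12c

/-- for any two L-equivalence classes `A` and `B` of reduced paradiagrams, if
`U(A) ∩ U(B) ≠ ∅` then there is an L-equivalence class `C` with `U(C) = U(A) ∩ U(B)`. -/
theorem stmt_12 (m : ℕ) (hm : 1 ≤ m) (μ ν : Fin m → ℤ) (h : ∀ k, μ k < ν k)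
    (A B : Set (Fin m → PD)) (hA : IsLClass A) (hB : IsLClass B)
    (hne : (UF μ ν A ∩ UF μ ν B).Nonempty) :
    ∃ C : Set (Fin m → PD), IsLClass C ∧ UF μ ν C = UF μ ν A ∩ UF μ ν B := by
  classical
  obtain ⟨δA, hredA, hAeq⟩ := hA
  obtain ⟨δB, hredB, hBeq⟩ := hB
  have hUA : UF μ ν A = Sol μ ν (Eset δA) := by
    rw [hAeq]; exact UF_class_eq_Sol μ ν h hredA
  have hUB : UF μ ν B = Sol μ ν (Eset δB) := by
    rw [hBeq]; exact UF_class_eq_Sol μ ν h hredB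
  set E : Set ℕ := Eset δA ∪ Eset δB with hEdef
  have hint : UF μ ν A ∩ UF μ ν B = Sol μ ν E := by rw [hUA, hUB, Sol_union]
  have hne' : (Sol μ ν E).Nonempty := hint ▸ hne
  have hEm : ∀ l ∈ E, l ≤ m := by rintro l (hl | hl) <;> exact Eset_le hl
  have hex : ∃ l₀, l₀ ≤ m ∧ l₀ ∉ E := by
    by_contra hc
    push_neg at hc
    obtain ⟨y, hy⟩ := hne'
    exact Sol_full hm μ ν h hc hy
  obtain ⟨l₀, hl₀m, hl₀⟩ := hex
  refine ⟨{δ | LEquiv (deltaC E) δ}, ⟨deltaC E, deltaC_red E, rfl⟩, ?_⟩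
  rw [UF_class_eq_Sol μ ν h (deltaC_red E), deltaC_Eset E hEm l₀ hl₀m hl₀, hint]
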